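/- Let ϱ₁,…,ϱₙ > 0, ϑ > 0, m₁,…,mₙ > 0, and set p_k = ϑ ϱ_k / m_k, π_m = ∑ₖ p_k, Y_k = ϱ_k / ϱ with ϱ = ∑ₖ ϱ_k. Let F_k ∈ ℝ³ satisfy ∑ₖ F_k = 0 and F_k = −(C₀/π_m)(∇p_k − Y_k ∇π_m) for given vectors ∇p_k (so that ∇π_m = ∑ₗ ∇p_l), with C₀ > 0. Then −∑_{k=1}^n (F_k / m_k) · ∇log p_k = ∑_{k=1}^n π_m |F_k|² / (C₀ ϑ ϱ_k) ≥ 0, where ∇log p_k := ∇p_k / p_k. -/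

import Mathlib

open BigOperators

theorem eq_sub_inv_smul_of_eq_neg_smul {K V : Type*} [Field K] [AddCommGroup V] [Module K V]
    {a : K} (ha : a ≠ 0) {F g v : V} (h : F = -a • (g - v)) : g = v - a⁻¹ • F := by
  rw [h, smul_smul, mul_neg, inv_mul_cancel₀ ha, neg_one_smul, sub_neg_eq_add, add_sub_cancel]

/-- With `p = ϑ ϱₖ / m` and `Y = ϱₖ / ϱ`, the factor `Y / (m p) = 1 / (ϑ ϱ)` no longer depends on
the species, which is what lets `∑ Fₖ = 0` cancel the `∇π` part of the sum. -/
theorem inner_smul_flux_smul_gradient {E : Type*} [NormedAddCommGroup E] [InnerProductSpace ℝ E]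
    {m ϑ ϱk ϱ C π Y : ℝ} (hm : m ≠ 0) (hϱk : ϱk ≠ 0) (hY : Y = ϱk / ϱ) {F G g : E}
    (hg : g = Y • G - (π / C) • F) :
    inner ℝ ((1 / m) • F) ((1 / (ϑ * ϱk / m)) • g)
      = 1 / (ϑ * ϱ) * inner ℝ F G - π * ‖F‖ ^ 2 / (C * ϑ * ϱk) := by
  rw [real_inner_smul_left, real_inner_smul_right, hg, inner_sub_right, real_inner_smul_right,
    real_inner_smul_right, real_inner_self_eq_norm_sq, hY]
  field_simp

theorem entropy_production_diffusion_nonneg_general (n : ℕ)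
    (m ϱk : Fin n → ℝ) (ϑ C₀ : ℝ)
    (hϱk : ∀ k, 0 < ϱk k) (hϑ : 0 < ϑ) (hm : ∀ k, 0 < m k) (hC₀ : 0 < C₀)
    (p : Fin n → ℝ) (hp : ∀ k, p k = ϑ * ϱk k / m k)
    (πm : ℝ) (hπ : πm = ∑ k, p k)
    (ϱ : ℝ)
    (Y : Fin n → ℝ) (hY : ∀ k, Y k = ϱk k / ϱ)
    (gp : Fin n → EuclideanSpace ℝ (Fin 3))
    (gπ : EuclideanSpace ℝ (Fin 3))
    (F : Fin n → EuclideanSpace ℝ (Fin 3))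
    (hFsum : ∑ k, F k = 0)
    (hF : ∀ k, F k = (-(C₀ / πm)) • (gp k - Y k • gπ)) :
    (-∑ k, (inner ℝ ((1 / m k) • F k) ((1 / p k) • gp k) : ℝ))
      = ∑ k, πm * ‖F k‖ ^ 2 / (C₀ * ϑ * ϱk k)
    ∧ 0 ≤ ∑ k, πm * ‖F k‖ ^ 2 / (C₀ * ϑ * ϱk k) := by
  have hp_pos : ∀ k, 0 < p k := fun k => by
    rw [hp k]
    exact div_pos (mul_pos hϑ (hϱk k)) (hm k)
  have hπm_pos : ∀ k, 0 < πm := fun k => hπ ▸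
    (hp_pos k).trans_le (Finset.single_le_sum (fun l _ => (hp_pos l).le) (Finset.mem_univ k))
  have hterm : ∀ k, inner ℝ ((1 / m k) • F k) ((1 / p k) • gp k)
      = 1 / (ϑ * ϱ) * inner ℝ (F k) gπ - πm * ‖F k‖ ^ 2 / (C₀ * ϑ * ϱk k) := fun k => by
    have hgp : gp k = Y k • gπ - (πm / C₀) • F k := by
      rw [← inv_div]
      exact eq_sub_inv_smul_of_eq_neg_smul (div_ne_zero hC₀.ne' (hπm_pos k).ne') (hF k)
    rw [hp k]
    exact inner_smul_flux_smul_gradient (hm k).ne' (hϱk k).ne' (hY k) hgp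
  have hflux : ∑ k, inner ℝ (F k) gπ = 0 := by rw [← sum_inner, hFsum, inner_zero_left]
  refine ⟨?_, Finset.sum_nonneg fun k _ => ?_⟩
  · rw [Finset.sum_congr rfl fun k _ => hterm k, Finset.sum_sub_distrib, ← Finset.mul_sum, hflux,
      mul_zero, zero_sub, neg_neg]
  · have := hπm_pos k
    have := hϱk k
    positivity

theorem entropy_production_diffusion_nonneg (n : ℕ) (hn : 1 ≤ n)
    (m ϱk : Fin n → ℝ) (ϑ C₀ : ℝ)
    (hϱk : ∀ k, 0 < ϱk k) (hϑ : 0 < ϑ) (hm : ∀ k, 0 < m k) (hC₀ : 0 < C₀)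
    (p : Fin n → ℝ) (hp : ∀ k, p k = ϑ * ϱk k / m k)
    (πm : ℝ) (hπ : πm = ∑ k, p k)
    (ϱ : ℝ) (hϱ : ϱ = ∑ k, ϱk k)
    (Y : Fin n → ℝ) (hY : ∀ k, Y k = ϱk k / ϱ)
    (gp : Fin n → EuclideanSpace ℝ (Fin 3))
    (gπ : EuclideanSpace ℝ (Fin 3)) (hgπ : gπ = ∑ l, gp l)
    (F : Fin n → EuclideanSpace ℝ (Fin 3))
    (hFsum : ∑ k, F k = 0)
    (hF : ∀ k, F k = (-(C₀ / πm)) • (gp k - Y k • gπ)) :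
    (-∑ k, (inner ℝ ((1 / m k) • F k) ((1 / p k) • gp k) : ℝ))
      = ∑ k, πm * ‖F k‖ ^ 2 / (C₀ * ϑ * ϱk k)
    ∧ 0 ≤ ∑ k, πm * ‖F k‖ ^ 2 / (C₀ * ϑ * ϱk k) :=
  entropy_production_diffusion_nonneg_general n m ϱk ϑ C₀ hϱk hϑ hm hC₀ p hp πm hπ ϱ Y hY gp gπ F
    hFsum hF
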